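/- For every integer n ≥ 2, the family of n×n matrices consisting of (1/(2ab)) · NESW(a×b) for a,b ≥ 1 with a+b ≤ n together with (1/(2n)) · HV(i) for 1 ≤ i ≤ n is affinely independent, and the symmetric Monge polytope SM_n equals the convex hull of this family; consequently SM_n is a simplex with n(n+1)/2 vertices. -/

import Mathlib

open Finset

/-- The Monge property for an `n × n` real matrix (indices are 0-based). -/
def IsMonge {n : ℕ} (C : Matrix (Fin n) (Fin n) ℝ) : Prop :=
  ∀ i I j J : Fin n, i < I → j < J → C i j + C I J ≤ C i J + C I j

/-- The symmetric Monge polytope: symmetric matrices with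
nonnegative entries summing to 1, and the Monge property. -/
def SM (n : ℕ) : Set (Matrix (Fin n) (Fin n) ℝ) :=
  {C | C.IsSymm ∧ (∀ i j, 0 ≤ C i j) ∧ (∑ i, ∑ j, C i j) = 1 ∧ IsMonge C}

/-- `NESW n a b` is the `n × n` 0/1 matrix whose (1-based) `(k, l)` entry is 1 iff
`(k ≤ a ∧ l > n - b) ∨ (k > n - b ∧ l ≤ a)`. -/
def NESW (n a b : ℕ) : Matrix (Fin n) (Fin n) ℝ :=
  Matrix.of fun k l =>
    if (k.val + 1 ≤ a ∧ n - b < l.val + 1) ∨ (n - b < k.val + 1 ∧ l.val + 1 ≤ a) then 1 else 0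

/-- `HV n i` is the `n × n` matrix whose (1-based) `(k, l)` entry is `[k = i] + [l = i]`. -/
def HV (n i : ℕ) : Matrix (Fin n) (Fin n) ℝ :=
  Matrix.of fun k l =>
    (if k.val + 1 = i then 1 else 0) + (if l.val + 1 = i then 1 else 0)

/-- The index set of pairs `(a, b)` with `a, b ≥ 1` and `a + b ≤ n`. -/
def idx (n : ℕ) : Finset (ℕ × ℕ) :=
  (Finset.range (n + 1) ×ˢ Finset.range (n + 1)).filter
    fun ab => 1 ≤ ab.1 ∧ 1 ≤ ab.2 ∧ ab.1 + ab.2 ≤ n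

/-- The candidate vertices of the symmetric Monge polytope: the matrices
`(1/(2ab)) • NESW (a × b)` together with the matrices `(1/(2n)) • HV i`. -/
noncomputable def smVertex (n : ℕ)
    (v : {ab : ℕ × ℕ // ab ∈ idx n} ⊕ {i : ℕ // i ∈ Finset.Icc 1 n}) :
    Matrix (Fin n) (Fin n) ℝ :=
  match v with
  | Sum.inl ab => (1 / (2 * (ab.val.1 : ℝ) * (ab.val.2 : ℝ))) • NESW n ab.val.1 ab.val.2
  | Sum.inr i => (1 / (2 * (n : ℝ))) • HV n i.val


/-!
A symmetric `n × n` matrix `C` is determined by its diagonal and its second differences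
`Δ(p, q) = C p q + C (p+1) (q+1) - C p (q+1) - C (p+1) q` for `p ≤ q ≤ n - 2`: if all of
these vanish, so does every entry, by induction on the distance to the diagonal.
`NESW (a × b)` has zero diagonal and second differences `-1` exactly at `(a-1, n-b-1)` and its
transpose, while `HV i` has zero second differences and diagonal `2 [k = i]`. So suitably
scaled diagonal entries and negated second differences are coordinates dual to the candidate
vertices, and every symmetric matrix is the combination of the vertices with these
coordinates. On `SM_n` the coordinates are nonnegative (Monge property, nonnegative diagonal)
and sum to the entry sum, which is `1`, as every vertex has entry sum `1`.
-/

namespace SymmetricMonge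

abbrev Index (n : ℕ) := {ab : ℕ × ℕ // ab ∈ idx n} ⊕ {i : ℕ // i ∈ Finset.Icc 1 n}

variable {n : ℕ}

lemma mem_idx {ab : ℕ × ℕ} :
    ab ∈ idx n ↔ 1 ≤ ab.1 ∧ 1 ≤ ab.2 ∧ ab.1 + ab.2 ≤ n := by
  simp only [idx, mem_filter, mem_product, mem_range]
  omega

-- Zero outside the matrix, so that index arithmetic such as `p + 1` needs no bounds.
variable (n) in
noncomputable def natEntry (p q : ℕ) : Matrix (Fin n) (Fin n) ℝ →ₗ[ℝ] ℝ :=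
  if h : p < n ∧ q < n then Matrix.entryLinearMap ℝ ℝ ⟨p, h.1⟩ ⟨q, h.2⟩ else 0

lemma natEntry_apply {p q : ℕ} (hp : p < n) (hq : q < n) (C : Matrix (Fin n) (Fin n) ℝ) :
    natEntry n p q C = C ⟨p, hp⟩ ⟨q, hq⟩ := by
  simp [natEntry, hp, hq]

lemma natEntry_val (C : Matrix (Fin n) (Fin n) ℝ) (k l : Fin n) : natEntry n k l C = C k l :=
  natEntry_apply k.2 l.2 C

lemma natEntry_comm {C : Matrix (Fin n) (Fin n) ℝ} (hC : C.IsSymm) (p q : ℕ) :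
    natEntry n p q C = natEntry n q p C := by
  by_cases h : p < n ∧ q < n
  · rw [natEntry_apply h.1 h.2, natEntry_apply h.2 h.1, hC.apply]
  · simp [natEntry, h, show ¬(q < n ∧ p < n) by tauto]

variable (n) in
noncomputable def secondDiff (p q : ℕ) : Matrix (Fin n) (Fin n) ℝ →ₗ[ℝ] ℝ :=
  natEntry n p q + natEntry n (p + 1) (q + 1) - natEntry n p (q + 1) - natEntry n (p + 1) q

lemma secondDiff_apply (p q : ℕ) (C : Matrix (Fin n) (Fin n) ℝ) :
    secondDiff n p q C = natEntry n p q C + natEntry n (p + 1) (q + 1) C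
      - natEntry n p (q + 1) C - natEntry n (p + 1) q C :=
  rfl

lemma secondDiff_apply_of_lt {p q : ℕ} (hp : p + 1 < n) (hq : q + 1 < n)
    (C : Matrix (Fin n) (Fin n) ℝ) :
    secondDiff n p q C = C ⟨p, by omega⟩ ⟨q, by omega⟩ + C ⟨p + 1, hp⟩ ⟨q + 1, hq⟩
      - C ⟨p, by omega⟩ ⟨q + 1, hq⟩ - C ⟨p + 1, hp⟩ ⟨q, by omega⟩ := by
  simp only [secondDiff_apply, natEntry_apply hp hq, natEntry_apply (Nat.lt_of_succ_lt hp) hq,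
    natEntry_apply hp (Nat.lt_of_succ_lt hq),
    natEntry_apply (Nat.lt_of_succ_lt hp) (Nat.lt_of_succ_lt hq)]

lemma IsMonge.secondDiff_nonpos {C : Matrix (Fin n) (Fin n) ℝ} (hC : IsMonge C) {p q : ℕ}
    (hp : p + 1 < n) (hq : q + 1 < n) : secondDiff n p q C ≤ 0 := by
  rw [secondDiff_apply_of_lt hp hq]
  linarith [hC ⟨p, by omega⟩ ⟨p + 1, hp⟩ ⟨q, by omega⟩ ⟨q + 1, hq⟩
    (Fin.mk_lt_mk.2 p.lt_succ_self) (Fin.mk_lt_mk.2 q.lt_succ_self)]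

lemma eq_zero_of_secondDiff_eq_zero {R : Matrix (Fin n) (Fin n) ℝ} (hR : R.IsSymm)
    (hdiag : ∀ p < n, natEntry n p p R = 0)
    (hdiff : ∀ p q, p ≤ q → q + 1 < n → secondDiff n p q R = 0) : R = 0 := by
  have upper : ∀ d k l, k + d = l → l < n → natEntry n k l R = 0 := by
    intro d
    induction d using Nat.strong_induction_on with
    | _ d ih =>
      rintro k l rfl hl
      match d with
      | 0 => exact hdiag k hl
      | 1 =>
        have h := hdiff k k le_rfl hl
        rw [secondDiff_apply, natEntry_comm hR (k + 1) k, hdiag k (by omega),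
          hdiag (k + 1) hl] at h
        linarith
      | d + 2 =>
        have h := hdiff k (k + d + 1) (by omega) (by omega)
        rw [secondDiff_apply, ih (d + 1) (by omega) k _ (by omega) (by omega),
          ih (d + 1) (by omega) (k + 1) _ (by omega) (by omega),
          ih d (by omega) (k + 1) _ (by omega) (by omega)] at h
        change natEntry n k (k + d + 1 + 1) R = 0
        linarith
  ext k l
  rw [Matrix.zero_apply, ← natEntry_val R k l]
  rcases le_total k l with hkl | hlk
  · exact upper (l - k) k l (by omega) l.2
  · rw [natEntry_comm hR]
    exact upper (k - l) l k (by omega) k.2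

lemma secondDiff_NESW {a b p q : ℕ} (ha : 1 ≤ a) (hab : a + b ≤ n) (hp : p + 1 < n)
    (hq : q + 1 < n) :
    secondDiff n p q (NESW n a b) =
      -(if p = a - 1 ∧ q = n - b - 1 then 1 else 0)
        - (if p = n - b - 1 ∧ q = a - 1 then 1 else 0) := by
  rw [secondDiff_apply_of_lt hp hq]
  simp only [NESW, Matrix.of_apply]
  split_ifs <;> norm_num <;> omega

lemma secondDiff_HV (i : ℕ) {p q : ℕ} (hp : p + 1 < n) (hq : q + 1 < n) :
    secondDiff n p q (HV n i) = 0 := by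
  rw [secondDiff_apply_of_lt hp hq]
  simp only [HV, Matrix.of_apply]
  ring

lemma NESW_apply_self {a b : ℕ} (hab : a + b ≤ n) (k : Fin n) : NESW n a b k k = 0 := by
  simp only [NESW, Matrix.of_apply]
  exact if_neg (by omega)

lemma HV_apply_self (i : ℕ) (k : Fin n) : HV n i k k = 2 * if k.val + 1 = i then 1 else 0 := by
  simp only [HV, Matrix.of_apply]
  ring

lemma smVertex_isSymm (v : Index n) : (smVertex n v).IsSymm := by
  rcases v with ⟨⟨a, b⟩, -⟩ | ⟨i, -⟩
  · refine Matrix.IsSymm.smul (Matrix.IsSymm.ext fun k l => ?_) _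
    simp only [NESW, Matrix.of_apply]
    congr 1
    exact propext (by tauto)
  · refine Matrix.IsSymm.smul (Matrix.IsSymm.ext fun k l => ?_) _
    simp only [HV, Matrix.of_apply]
    ring

-- For `a + b = n` the two second differences `-1` of `NESW n a b`, at `(a-1, n-b-1)` and at its
-- transpose, coincide.
variable (n) in
noncomputable def smWeight (a b : ℕ) : ℝ := if a + b = n then a * b else 2 * a * b

lemma smWeight_pos {a b : ℕ} (ha : 1 ≤ a) (hb : 1 ≤ b) : 0 < smWeight n a b := by
  have : (0 : ℝ) < a * b := by positivity
  unfold smWeight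
  split_ifs <;> linarith

variable (n) in
noncomputable def smCoord : Matrix (Fin n) (Fin n) ℝ →ₗ[ℝ] (Index n → ℝ) :=
  LinearMap.pi fun
    | Sum.inl ab => -(smWeight n ab.1.1 ab.1.2 • secondDiff n (ab.1.1 - 1) (n - ab.1.2 - 1))
    | Sum.inr i => (n : ℝ) • natEntry n (i.1 - 1) (i.1 - 1)

lemma smCoord_inl (C : Matrix (Fin n) (Fin n) ℝ) (ab : {ab : ℕ × ℕ // ab ∈ idx n}) :
    smCoord n C (Sum.inl ab) =
      -(smWeight n ab.1.1 ab.1.2 * secondDiff n (ab.1.1 - 1) (n - ab.1.2 - 1) C) :=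
  rfl

lemma smCoord_inr (C : Matrix (Fin n) (Fin n) ℝ) (i : {i : ℕ // i ∈ Finset.Icc 1 n}) :
    smCoord n C (Sum.inr i) = n * natEntry n (i.1 - 1) (i.1 - 1) C :=
  rfl

lemma smCoord_smVertex_inl (ab : {ab : ℕ × ℕ // ab ∈ idx n}) (v : Index n) :
    smCoord n (smVertex n (Sum.inl ab)) v = if v = Sum.inl ab then 1 else 0 := by
  obtain ⟨⟨a, b⟩, hab⟩ := ab
  obtain ⟨ha, hb, hab⟩ : 1 ≤ a ∧ 1 ≤ b ∧ a + b ≤ n := mem_idx.1 hab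
  rcases v with ⟨⟨a', b'⟩, hab'⟩ | ⟨j, hj⟩
  · obtain ⟨ha', hb', hab'⟩ : 1 ≤ a' ∧ 1 ≤ b' ∧ a' + b' ≤ n := mem_idx.1 hab'
    simp only [smCoord_inl, smVertex, map_smul, smul_eq_mul,
      secondDiff_NESW ha hab (by omega : a' - 1 + 1 < n) (by omega : n - b' - 1 + 1 < n),
      Sum.inl.injEq, Subtype.mk.injEq, Prod.mk.injEq]
    by_cases hv : a' = a ∧ b' = b
    · obtain ⟨rfl, rfl⟩ := hv
      have : (a' : ℝ) * b' ≠ 0 := by positivity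
      unfold smWeight
      split_ifs <;> first | omega | (field_simp; norm_num)
    · rw [if_neg (by omega), if_neg (by omega), if_neg hv]
      ring
  · obtain ⟨hj, hjn⟩ := mem_Icc.1 hj
    simp only [smCoord_inr, smVertex, Matrix.smul_apply, NESW_apply_self hab, reduceCtorEq,
      natEntry_apply (by omega : j - 1 < n) (by omega : j - 1 < n), if_false]
    ring

lemma smCoord_smVertex_inr (i : {i : ℕ // i ∈ Finset.Icc 1 n}) (v : Index n) :
    smCoord n (smVertex n (Sum.inr i)) v = if v = Sum.inr i then 1 else 0 := by
  obtain ⟨i, hi⟩ := i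
  obtain ⟨hi, hin⟩ := mem_Icc.1 hi
  rcases v with ⟨⟨a', b'⟩, hab'⟩ | ⟨j, hj⟩
  · obtain ⟨ha', hb', hab'⟩ : 1 ≤ a' ∧ 1 ≤ b' ∧ a' + b' ≤ n := mem_idx.1 hab'
    simp only [smCoord_inl, smVertex, map_smul, smul_eq_mul, reduceCtorEq, if_false,
      secondDiff_HV i (by omega : a' - 1 + 1 < n) (by omega : n - b' - 1 + 1 < n)]
    ring
  · obtain ⟨hj, hjn⟩ := mem_Icc.1 hj
    have : (n : ℝ) ≠ 0 := Nat.cast_ne_zero.2 (by omega)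
    simp only [smCoord_inr, smVertex, Matrix.smul_apply, smul_eq_mul, HV_apply_self,
      natEntry_apply (by omega : j - 1 < n) (by omega : j - 1 < n), Sum.inr.injEq,
      Subtype.mk.injEq]
    by_cases hij : j = i
    · rw [if_pos (by omega), if_pos hij]
      field_simp
    · rw [if_neg (by omega), if_neg hij]
      ring

lemma smCoord_smVertex (u : Index n) : smCoord n (smVertex n u) = Pi.single u 1 := by
  ext v
  rw [Pi.single_apply]
  rcases u with ab | i
  exacts [smCoord_smVertex_inl ab v, smCoord_smVertex_inr i v]

variable (n) in
lemma linearIndependent_smVertex : LinearIndependent ℝ (smVertex n) :=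
  .of_comp (smCoord n) <| by
    simpa only [Function.comp_def, smCoord_smVertex] using
      Pi.linearIndependent_single_one (Index n) ℝ

lemma eq_zero_of_smCoord_eq_zero {R : Matrix (Fin n) (Fin n) ℝ} (hR : R.IsSymm)
    (h : smCoord n R = 0) : R = 0 := by
  refine eq_zero_of_secondDiff_eq_zero hR (fun p hp => ?_) (fun p q hpq hq => ?_)
  · have hcoord := congrFun h (Sum.inr ⟨p + 1, mem_Icc.2 ⟨by omega, by omega⟩⟩)
    rw [smCoord_inr, Nat.add_sub_cancel, Pi.zero_apply] at hcoord
    exact (mul_eq_zero.1 hcoord).resolve_left (Nat.cast_ne_zero.2 (by omega))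
  · have hcoord :=
      congrFun h (Sum.inl ⟨(p + 1, n - 1 - q), mem_idx.2 ⟨by omega, by omega, by omega⟩⟩)
    simp only [smCoord_inl, Pi.zero_apply, neg_eq_zero] at hcoord
    rw [Nat.add_sub_cancel, show n - (n - 1 - q) - 1 = q by omega] at hcoord
    exact (mul_eq_zero.1 hcoord).resolve_left (smWeight_pos (by omega) (by omega)).ne'

lemma sum_smCoord_smul_smVertex {C : Matrix (Fin n) (Fin n) ℝ} (hC : C.IsSymm) :
    ∑ v, smCoord n C v • smVertex n v = C := by
  refine (sub_eq_zero.1 (eq_zero_of_smCoord_eq_zero ?_ ?_)).symm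
  · exact hC.sub <| Finset.sum_induction _ Matrix.IsSymm (fun _ _ => .add) Matrix.isSymm_zero
      fun v _ => (smVertex_isSymm v).smul _
  · simp only [map_sub, map_sum, map_smul, smCoord_smVertex]
    rw [← pi_eq_sum_univ', sub_self]

variable (n) in
noncomputable def entrySum : Matrix (Fin n) (Fin n) ℝ →ₗ[ℝ] ℝ :=
  ∑ k, ∑ l, Matrix.entryLinearMap ℝ ℝ k l

lemma entrySum_apply (C : Matrix (Fin n) (Fin n) ℝ) : entrySum n C = ∑ k, ∑ l, C k l := by
  simp [entrySum, LinearMap.sum_apply]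

lemma sum_fin_val_lt {a : ℕ} (ha : a ≤ n) :
    ∑ k : Fin n, (if k.val < a then 1 else 0 : ℝ) = a := by
  simp [Finset.sum_boole, Fin.card_filter_val_lt, ha]

lemma sum_fin_le_val {b : ℕ} (hb : b ≤ n) :
    ∑ k : Fin n, (if n - b ≤ k.val then 1 else 0 : ℝ) = b := by
  have h (k : Fin n) :
      (if n - b ≤ k.val then 1 else 0 : ℝ) = 1 - if k.val < n - b then 1 else 0 := by
    split_ifs <;> first | omega | norm_num
  simp only [h, Finset.sum_sub_distrib, sum_fin_val_lt (Nat.sub_le n b), Finset.sum_const,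
    card_univ, Fintype.card_fin, nsmul_one, Nat.cast_sub hb]
  ring

lemma sum_fin_val_add_one_eq {i : ℕ} (hi : 1 ≤ i) (hin : i ≤ n) :
    ∑ k : Fin n, (if k.val + 1 = i then 1 else 0 : ℝ) = 1 := by
  have h (k : Fin n) : k.val + 1 = i ↔ k = ⟨i - 1, by omega⟩ := by
    simp only [Fin.ext_iff]
    omega
  simp only [h, Finset.sum_ite_eq', mem_univ, if_true]

lemma entrySum_NESW {a b : ℕ} (hab : a + b ≤ n) : entrySum n (NESW n a b) = 2 * a * b := by
  have h (k l : Fin n) : NESW n a b k l =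
      (if k.val < a then 1 else 0) * (if n - b ≤ l.val then 1 else 0) +
      (if n - b ≤ k.val then 1 else 0) * (if l.val < a then 1 else 0) := by
    simp only [NESW, Matrix.of_apply]
    split_ifs <;> norm_num <;> omega
  simp only [entrySum_apply, h, Finset.sum_add_distrib, ← Finset.mul_sum, ← Finset.sum_mul,
    sum_fin_val_lt (by omega : a ≤ n), sum_fin_le_val (by omega : b ≤ n)]
  ring

lemma entrySum_HV {i : ℕ} (hi : 1 ≤ i) (hin : i ≤ n) : entrySum n (HV n i) = 2 * n := by
  simp only [entrySum_apply, HV, Matrix.of_apply, Finset.sum_add_distrib,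
    sum_fin_val_add_one_eq hi hin, Finset.sum_const, card_univ, Fintype.card_fin,
    nsmul_eq_mul, ← Finset.mul_sum]
  ring

lemma entrySum_smVertex (v : Index n) : entrySum n (smVertex n v) = 1 := by
  rcases v with ⟨⟨a, b⟩, hab⟩ | ⟨i, hi⟩
  · obtain ⟨ha, hb, hab⟩ : 1 ≤ a ∧ 1 ≤ b ∧ a + b ≤ n := mem_idx.1 hab
    have : (a : ℝ) * b ≠ 0 := by positivity
    rw [smVertex, map_smul, entrySum_NESW hab, smul_eq_mul]
    field_simp
  · obtain ⟨hi, hin⟩ := mem_Icc.1 hi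
    have : (n : ℝ) ≠ 0 := Nat.cast_ne_zero.2 (by omega)
    rw [smVertex, map_smul, entrySum_HV hi hin, smul_eq_mul]
    field_simp

lemma isMonge_NESW {a b : ℕ} (hab : a + b ≤ n) : IsMonge (NESW n a b) := by
  intro i I j J hiI hjJ
  rw [Fin.lt_def] at hiI hjJ
  simp only [NESW, Matrix.of_apply]
  split_ifs <;> norm_num <;> omega

lemma isMonge_HV (i : ℕ) : IsMonge (HV n i) := by
  intro k K l L _ _
  simp only [HV, Matrix.of_apply]
  linarith

lemma IsMonge.smul {C : Matrix (Fin n) (Fin n) ℝ} (hC : IsMonge C) {c : ℝ} (hc : 0 ≤ c) :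
    IsMonge (c • C) := by
  intro i I j J hiI hjJ
  simp only [Matrix.smul_apply, smul_eq_mul, ← mul_add]
  exact mul_le_mul_of_nonneg_left (hC i I j J hiI hjJ) hc

lemma smVertex_mem_SM (v : Index n) : smVertex n v ∈ SM n := by
  refine ⟨smVertex_isSymm v, fun k l => ?_, by rw [← entrySum_apply, entrySum_smVertex], ?_⟩
  · rcases v with ⟨⟨a, b⟩, -⟩ | ⟨i, -⟩ <;>
      simp only [smVertex, NESW, HV, Matrix.smul_apply, Matrix.of_apply, smul_eq_mul] <;>
      split_ifs <;> positivity
  · rcases v with ⟨⟨a, b⟩, hab⟩ | ⟨i, -⟩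
    · exact IsMonge.smul (isMonge_NESW (mem_idx.1 hab).2.2) (by positivity)
    · exact IsMonge.smul (isMonge_HV i) (by positivity)

lemma convex_SM : Convex ℝ (SM n) := by
  rintro C ⟨hCs, hCpos, hCsum, hCM⟩ D ⟨hDs, hDpos, hDsum, hDM⟩ s t hs ht hst
  have happ (i j : Fin n) : (s • C + t • D) i j = s * C i j + t * D i j := rfl
  refine ⟨(hCs.smul s).add (hDs.smul t), fun i j => ?_, ?_, fun i I j J hiI hjJ => ?_⟩
  · rw [happ]
    have := hCpos i j
    have := hDpos i j
    positivity
  · simp only [happ, Finset.sum_add_distrib, ← Finset.mul_sum, hCsum, hDsum, mul_one, hst]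
  · simp only [happ]
    nlinarith [hCM i I j J hiI hjJ, hDM i I j J hiI hjJ]

lemma smCoord_nonneg {C : Matrix (Fin n) (Fin n) ℝ} (hC : C ∈ SM n) (v : Index n) :
    0 ≤ smCoord n C v := by
  obtain ⟨-, hpos, -, hM⟩ := hC
  rcases v with ⟨⟨a, b⟩, hab⟩ | ⟨i, -⟩
  · obtain ⟨ha, hb, hab⟩ : 1 ≤ a ∧ 1 ≤ b ∧ a + b ≤ n := mem_idx.1 hab
    rw [smCoord_inl, neg_nonneg]
    dsimp only
    exact mul_nonpos_of_nonneg_of_nonpos (smWeight_pos ha hb).le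
      (IsMonge.secondDiff_nonpos hM (by omega) (by omega))
  · rw [smCoord_inr]
    unfold natEntry
    split_ifs
    · exact mul_nonneg n.cast_nonneg (hpos _ _)
    · simp

lemma sum_smCoord {C : Matrix (Fin n) (Fin n) ℝ} (hC : C ∈ SM n) :
    ∑ v, smCoord n C v = 1 := by
  calc ∑ v, smCoord n C v = entrySum n (∑ v, smCoord n C v • smVertex n v) := by
        simp only [map_sum, map_smul, entrySum_smVertex, smul_eq_mul, mul_one]
    _ = 1 := by rw [sum_smCoord_smul_smVertex hC.1, entrySum_apply, hC.2.2.1]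

variable (n) in
theorem SM_eq_convexHull : SM n = convexHull ℝ (Set.range (smVertex n)) := by
  refine subset_antisymm (fun C hC => ?_) (convexHull_min ?_ convex_SM)
  · rw [← sum_smCoord_smul_smVertex hC.1]
    exact (convex_convexHull ℝ _).sum_mem (fun v _ => smCoord_nonneg hC v) (sum_smCoord hC)
      fun v _ => subset_convexHull ℝ _ (Set.mem_range_self v)
  · rintro _ ⟨v, rfl⟩
    exact smVertex_mem_SM v

variable (n) in
lemma card_idx : #(idx n) = ∑ q ∈ range n, q := by
  rw [← Finset.sum_congr rfl fun q _ => card_range q, ← card_sigma]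
  refine card_nbij' (fun ab => ⟨n - ab.2, ab.1 - 1⟩) (fun x => (x.2 + 1, n - x.1)) ?_ ?_ ?_ ?_
  · intro ab hab
    simp only [coe_sigma, Set.mem_sigma_iff, coe_range, Set.mem_Iio]
    simp only [mem_coe, mem_idx] at hab
    omega
  · rintro ⟨q, p⟩ h
    simp only [coe_sigma, Set.mem_sigma_iff, coe_range, Set.mem_Iio] at h
    simp only [mem_coe, mem_idx]
    omega
  · intro ab hab
    simp only [mem_coe, mem_idx] at hab
    ext <;> dsimp only <;> omega
  · rintro ⟨q, p⟩ h
    simp only [coe_sigma, Set.mem_sigma_iff, coe_range, Set.mem_Iio] at h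
    simp only [Sigma.mk.injEq, heq_eq_eq]
    omega

variable (n) in
lemma card_idx_add_card_Icc : #(idx n) + #(Icc 1 n) = n * (n + 1) / 2 := by
  rw [card_idx, Nat.card_Icc, Nat.add_sub_cancel, ← sum_range_succ, sum_range_id,
    Nat.add_sub_cancel, mul_comm]

end SymmetricMonge

theorem sm_simplex_general (n : ℕ) :
    AffineIndependent ℝ (smVertex n) ∧
    SM n = convexHull ℝ (Set.range (smVertex n)) ∧
    Function.Injective (smVertex n) ∧
    (idx n).card + (Finset.Icc 1 n).card = n * (n + 1) / 2 := by
  have hli := SymmetricMonge.linearIndependent_smVertex n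
  exact ⟨hli.affineIndependent, SymmetricMonge.SM_eq_convexHull n, hli.injective,
    SymmetricMonge.card_idx_add_card_Icc n⟩

/-- The family consisting of `(1/(2ab)) • NESW (a × b)` (for `a, b ≥ 1`, `a + b ≤ n`)
together with `(1/(2n)) • HV i` (for `1 ≤ i ≤ n`) is affinely independent, and the
symmetric Monge polytope is its convex hull; it is a simplex with `n(n+1)/2` vertices. -/
theorem sm_simplex (n : ℕ) (hn : 2 ≤ n) :
    AffineIndependent ℝ (smVertex n) ∧
    SM n = convexHull ℝ (Set.range (smVertex n)) ∧
    Function.Injective (smVertex n) ∧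
    (idx n).card + (Finset.Icc 1 n).card = n * (n + 1) / 2 :=
  sm_simplex_general n
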